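/- Let m₂ = m₃ = m > 0, m₁ > 0 and μ₁ > μ₂ > 0, and let q₁, q₄ > 0 satisfy the isosceles equilibrium equations m²/q₁² + 4mm₁q₁/(q₁²+4q₄²)^{3/2} − μ₂²/(ν₁q₁³) = 0 and 16mm₁q₄/(q₁²+4q₄²)^{3/2} − μ₁²/(ν₂q₄³) = 0. Then the 2×2 matrix ∂²H/∂(q₁,q₄)² of second partial derivatives of the fully reduced Hamiltonian H with respect to (q₁,q₄), evaluated at the point with positions (q₁,0,0,q₄) and zero momenta, is positive definite; equivalently, both of its eigenvalues are positive. -/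

import Mathlib

/-!
Restricted to the plane `q = (x, 0, 0, y)`, `p = 0`, the reduced Hamiltonian is the effective
potential `φ = a/x² + b/y² - c/x - d/R` with `R = √(x² + 4y²)`, `a = μ₂²/(2ν₁)`, `b = μ₁²/(2ν₂)`,
`c = m²`, `d = 4mm₁`. The equilibrium equations say `φₓ = φᵧ = 0`, and the `(q₁, q₄)` block of
the Hessian of `H` is the Hessian of `φ`. Eliminating `a` and `b` with the two equations gives
`φₓₓ = c/x³ + d(x² + 16y²)/R⁵`, `φᵧᵧ = 16d(x² + y²)/R⁵`, `φₓᵧ = -12dxy/R⁵`, hence `φₓₓ > 0` and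
`φₓₓφᵧᵧ - φₓᵧ² = c/x³ · φᵧᵧ + 16d²/R⁶ > 0`.
-/

noncomputable section

/-- `f(q_i, q_j, L₃) = ((L_d + L_s)²q_i² + (L_d − L_s)²q_j²)/(16A²)`,
with `L_d = √(Δ² − L₃²)`, `L_s = √(Σ² − L₃²)`, `Δ = μ₁ − μ₂`, `Σ = μ₁ + μ₂`. -/
def fred (μ₁ μ₂ A qi qj L₃ : ℝ) : ℝ :=
  let Ld := Real.sqrt ((μ₁ - μ₂) ^ 2 - L₃ ^ 2)
  let Ls := Real.sqrt ((μ₁ + μ₂) ^ 2 - L₃ ^ 2)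
  ((Ld + Ls) ^ 2 * qi ^ 2 + (Ld - Ls) ^ 2 * qj ^ 2) / (16 * A ^ 2)

/-- The fully reduced Hamiltonian of the three-body problem in `ℝ⁴` on the phase space
`ℝ⁴ × ℝ⁴` (positions `q`, momenta `p`). -/
def Hred (ν₁ ν₂ μ₁ μ₂ : ℝ) (V : (Fin 3 → ℝ) → ℝ) (z : (Fin 4 → ℝ) × (Fin 4 → ℝ)) : ℝ :=
  let q := z.1; let p := z.2
  let A := (q 0 * q 3 - q 1 * q 2) / 2
  let L₃ := q 0 * p 1 - q 1 * p 0 + q 2 * p 3 - q 3 * p 2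
  (1 / (2 * ν₁)) * (p 0 ^ 2 + p 1 ^ 2 + fred μ₁ μ₂ A (q 2) (q 3) L₃) +
    (1 / (2 * ν₂)) * (p 2 ^ 2 + p 3 ^ 2 + fred μ₁ μ₂ A (q 0) (q 1) L₃) +
    V ![q 0 ^ 2 + q 1 ^ 2, q 2 ^ 2 + q 3 ^ 2, q 0 * q 2 + q 1 * q 3]

/-- The Newtonian potential of the three-body problem in the translation-reduced
variables: `V(s₁,s₂,s₃) = −m₂m₃/√s₁ − m₃m₁/√(a₂²s₁+s₂+2a₂s₃) − m₁m₂/√(a₃²s₁+s₂−2a₃s₃)`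
with `a₂ = m₂/(m₂+m₃)`, `a₃ = m₃/(m₂+m₃)`. -/
def Vnewt (m₁ m₂ m₃ : ℝ) (s : Fin 3 → ℝ) : ℝ :=
  -(m₂ * m₃ / Real.sqrt (s 0)) -
    m₃ * m₁ / Real.sqrt ((m₂ / (m₂ + m₃)) ^ 2 * s 0 + s 1 + 2 * (m₂ / (m₂ + m₃)) * s 2) -
    m₁ * m₂ / Real.sqrt ((m₃ / (m₂ + m₃)) ^ 2 * s 0 + s 1 - 2 * (m₃ / (m₂ + m₃)) * s 2)

/-- Phase space of the fully reduced Hamiltonian. -/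
abbrev PS := (Fin 4 → ℝ) × (Fin 4 → ℝ)

/-- Basis vector in the `q_i` direction. -/
def eQ (i : Fin 4) : PS := (Pi.single i 1, 0)

/-- Second directional derivative (Hessian bilinear form). -/
def D2 (H : PS → ℝ) (z u v : PS) : ℝ :=
  fderiv ℝ (fun w => fderiv ℝ H w v) z u

open Filter Topology

section SecondDerivative

variable {E : Type*} [NormedAddCommGroup E] [NormedSpace ℝ E] {H : E → ℝ} {z : E}

theorem fderiv_fderiv_apply_eq_of_hasDerivAt (hH : ContDiffAt ℝ 2 H z) {u v : E}
    {g : ℝ → ℝ} {c : ℝ}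
    (hg : ∀ᶠ s in 𝓝 0, HasDerivAt (fun t : ℝ => H (z + s • u + t • v)) (g s) 0)
    (hc : HasDerivAt g c 0) :
    fderiv ℝ (fun w => fderiv ℝ H w v) z u = c := by
  have hdiff : ∀ᶠ s in 𝓝 (0 : ℝ), DifferentiableAt ℝ H (z + s • u) := by
    have hcont : ContinuousAt (fun s : ℝ => z + s • u) 0 := by fun_prop
    have := (hH.eventually (by simp)).mono fun w hw => hw.differentiableAt (by simp)
    exact hcont.eventually (by simpa using this)
  have hgeq : g =ᶠ[𝓝 0] fun s => fderiv ℝ H (z + s • u) v := by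
    filter_upwards [hg, hdiff] with s hgs hds
    exact hgs.unique (hds.hasFDerivAt.hasLineDerivAt v)
  have hF : DifferentiableAt ℝ (fun w => fderiv ℝ H w v) z :=
    ((hH.fderiv_right (m := 1) le_rfl).differentiableAt one_ne_zero).clm_apply
      (differentiableAt_const v)
  exact (HasDerivAt.congr_of_eventuallyEq (hF.hasFDerivAt.hasLineDerivAt u) hgeq).unique hc

theorem fderiv_fderiv_apply_comm (hH : ContDiffAt ℝ 2 H z) (u v : E) :
    fderiv ℝ (fun w => fderiv ℝ H w v) z u = fderiv ℝ (fun w => fderiv ℝ H w u) z v := by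
  have hF : DifferentiableAt ℝ (fderiv ℝ H) z :=
    (hH.fderiv_right (m := 1) le_rfl).differentiableAt one_ne_zero
  rw [fderiv_clm_apply hF (differentiableAt_const v),
    fderiv_clm_apply hF (differentiableAt_const u)]
  simpa using hH.isSymmSndFDerivAt (by simp) u v

end SecondDerivative

theorem HasDerivAt.comp_const_add_zero {f : ℝ → ℝ} {f' x : ℝ} (h : HasDerivAt f f' x) :
    HasDerivAt (fun t => f (x + t)) f' 0 :=
  HasDerivAt.comp_const_add x 0 (by rwa [add_zero])

theorem Matrix.posDef_fin_two_of {a b c : ℝ} (ha : 0 < a) (hdet : 0 < a * c - b ^ 2) :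
    (!![a, b; b, c]).PosDef := by
  refine Matrix.PosDef.of_dotProduct_mulVec_pos ?_ fun v hv => ?_
  · ext i j
    fin_cases i <;> fin_cases j <;> rfl
  have hform : dotProduct (star v) ((!![a, b; b, c]).mulVec v) =
      a * v 0 ^ 2 + 2 * b * v 0 * v 1 + c * v 1 ^ 2 := by
    simp [dotProduct, Matrix.mulVec, Fin.sum_univ_two]
    ring
  have hsquare : a * (a * v 0 ^ 2 + 2 * b * v 0 * v 1 + c * v 1 ^ 2) =
      (a * v 0 + b * v 1) ^ 2 + (a * c - b ^ 2) * v 1 ^ 2 := by ring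
  rw [hform]
  refine pos_of_mul_pos_right (a := a) ?_ ha.le
  rw [hsquare]
  rcases eq_or_ne (v 1) 0 with h1 | h1
  · have h0 : v 0 ≠ 0 := fun h0 => hv (funext fun i => by fin_cases i <;> simp [h0, h1])
    simpa [h1] using sq_pos_of_ne_zero (mul_ne_zero ha.ne' h0)
  · exact add_pos_of_nonneg_of_pos (sq_nonneg _) (mul_pos hdet (by positivity))

def effPot (a b c d x y : ℝ) : ℝ := a / x ^ 2 + b / y ^ 2 - c / x - d / √(x ^ 2 + 4 * y ^ 2)

def effPotDx (a c d x y : ℝ) : ℝ :=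
  -2 * a / x ^ 3 + c / x ^ 2 + d * x / √(x ^ 2 + 4 * y ^ 2) ^ 3

def effPotDy (b d x y : ℝ) : ℝ := -2 * b / y ^ 3 + 4 * d * y / √(x ^ 2 + 4 * y ^ 2) ^ 3

def effPotDxx (a c d x y : ℝ) : ℝ :=
  6 * a / x ^ 4 - 2 * c / x ^ 3 + d / √(x ^ 2 + 4 * y ^ 2) ^ 3
    - 3 * d * x ^ 2 / √(x ^ 2 + 4 * y ^ 2) ^ 5

def effPotDxy (d x y : ℝ) : ℝ := -12 * d * x * y / √(x ^ 2 + 4 * y ^ 2) ^ 5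

def effPotDyy (b d x y : ℝ) : ℝ :=
  6 * b / y ^ 4 + 4 * d / √(x ^ 2 + 4 * y ^ 2) ^ 3 - 48 * d * y ^ 2 / √(x ^ 2 + 4 * y ^ 2) ^ 5

section EffPotDerivatives

variable {a b c d x y : ℝ}

lemma hasDerivAt_sqrt_sq_add_four_mul_sq_x (hx : x ≠ 0) :
    HasDerivAt (fun x => √(x ^ 2 + 4 * y ^ 2)) (x / √(x ^ 2 + 4 * y ^ 2)) x := by
  refine HasDerivAt.congr_deriv
    (((hasDerivAt_pow 2 x).add_const (4 * y ^ 2)).sqrt (by positivity)) ?_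
  field_simp
  ring

lemma hasDerivAt_sqrt_sq_add_four_mul_sq_y (hy : y ≠ 0) :
    HasDerivAt (fun y => √(x ^ 2 + 4 * y ^ 2)) (4 * y / √(x ^ 2 + 4 * y ^ 2)) y := by
  refine HasDerivAt.congr_deriv
    ((((hasDerivAt_pow 2 y).const_mul 4).const_add (x ^ 2)).sqrt (by positivity)) ?_
  field_simp
  ring

lemma hasDerivAt_effPot_x (hx : x ≠ 0) :
    HasDerivAt (fun x => effPot a b c d x y) (effPotDx a c d x y) x := by
  refine HasDerivAt.congr_deriv
    (((((hasDerivAt_const x a).fun_div (hasDerivAt_pow 2 x) (by positivity)).add_const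
      (b / y ^ 2)).fun_sub ((hasDerivAt_const x c).fun_div (hasDerivAt_id' x) hx)).fun_sub
      ((hasDerivAt_const x d).fun_div (hasDerivAt_sqrt_sq_add_four_mul_sq_x hx)
        (by positivity))) ?_
  simp only [effPotDx]
  field_simp
  ring

lemma hasDerivAt_effPot_y (hy : y ≠ 0) :
    HasDerivAt (fun y => effPot a b c d x y) (effPotDy b d x y) y := by
  refine HasDerivAt.congr_deriv
    (((((hasDerivAt_const y b).fun_div (hasDerivAt_pow 2 y) (by positivity)).const_add
      (a / x ^ 2)).sub_const (c / x)).fun_sub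
      ((hasDerivAt_const y d).fun_div (hasDerivAt_sqrt_sq_add_four_mul_sq_y hy)
        (by positivity))) ?_
  simp only [effPotDy]
  field_simp
  ring

lemma hasDerivAt_effPotDx_x (hx : x ≠ 0) :
    HasDerivAt (fun x => effPotDx a c d x y) (effPotDxx a c d x y) x := by
  refine HasDerivAt.congr_deriv
    ((((hasDerivAt_const x (-2 * a)).fun_div (hasDerivAt_pow 3 x) (by positivity)).fun_add
      ((hasDerivAt_const x c).fun_div (hasDerivAt_pow 2 x) (by positivity))).fun_add
      (((hasDerivAt_id' x).const_mul d).fun_div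
        ((hasDerivAt_sqrt_sq_add_four_mul_sq_x hx).fun_pow 3) (by positivity))) ?_
  simp only [effPotDxx]
  field_simp
  ring

lemma hasDerivAt_effPotDy_x (hx : x ≠ 0) :
    HasDerivAt (fun x => effPotDy b d x y) (effPotDxy d x y) x := by
  refine HasDerivAt.congr_deriv
    (((hasDerivAt_const x (4 * d * y)).fun_div
      ((hasDerivAt_sqrt_sq_add_four_mul_sq_x hx).fun_pow 3) (by positivity)).const_add
      (-2 * b / y ^ 3)) ?_
  simp only [effPotDxy]
  field_simp
  ring

lemma hasDerivAt_effPotDy_y (hy : y ≠ 0) :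
    HasDerivAt (fun y => effPotDy b d x y) (effPotDyy b d x y) y := by
  refine HasDerivAt.congr_deriv
    (((hasDerivAt_const y (-2 * b)).fun_div (hasDerivAt_pow 3 y) (by positivity)).fun_add
      (((hasDerivAt_id' y).const_mul (4 * d)).fun_div
        ((hasDerivAt_sqrt_sq_add_four_mul_sq_y hy).fun_pow 3) (by positivity))) ?_
  simp only [effPotDyy]
  field_simp
  ring

lemma posDef_effPot_hessian_of_critical (hc : 0 ≤ c) (hd : 0 < d) (hx : 0 < x) (hy : y ≠ 0)
    (hDx : effPotDx a c d x y = 0) (hDy : effPotDy b d x y = 0) :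
    (!![effPotDxx a c d x y, effPotDxy d x y; effPotDxy d x y, effPotDyy b d x y]).PosDef := by
  unfold effPotDx at hDx
  unfold effPotDy at hDy
  unfold effPotDxx effPotDxy effPotDyy
  set R := √(x ^ 2 + 4 * y ^ 2)
  have hR : 0 < R := by positivity
  have hR2 : R ^ 2 = x ^ 2 + 4 * y ^ 2 := Real.sq_sqrt (by positivity)
  have hxx : 6 * a / x ^ 4 - 2 * c / x ^ 3 + d / R ^ 3 - 3 * d * x ^ 2 / R ^ 5 =
      c / x ^ 3 + d * (x ^ 2 + 16 * y ^ 2) / R ^ 5 := by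
    linear_combination (norm := skip) (-3 / x) * hDx + (4 * d / R ^ 5) * hR2
    field_simp
    ring
  have hyy : 6 * b / y ^ 4 + 4 * d / R ^ 3 - 48 * d * y ^ 2 / R ^ 5 =
      16 * d * (x ^ 2 + y ^ 2) / R ^ 5 := by
    linear_combination (norm := skip) (-3 / y) * hDy + (16 * d / R ^ 5) * hR2
    field_simp
    ring
  have hdet : (c / x ^ 3 + d * (x ^ 2 + 16 * y ^ 2) / R ^ 5) * (16 * d * (x ^ 2 + y ^ 2) / R ^ 5)
      - (-12 * d * x * y / R ^ 5) ^ 2 =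
      c / x ^ 3 * (16 * d * (x ^ 2 + y ^ 2) / R ^ 5)
        + 16 * d ^ 2 * (x ^ 2 + 4 * y ^ 2) ^ 2 / R ^ 10 := by
    field_simp
    ring
  rw [hxx, hyy]
  exact Matrix.posDef_fin_two_of (by positivity) (by rw [hdet]; positivity)

end EffPotDerivatives

theorem rpow_three_halves_eq_sqrt_pow {t : ℝ} (ht : 0 ≤ t) : t ^ ((3 : ℝ) / 2) = √t ^ 3 := by
  rw [Real.sqrt_eq_rpow, ← Real.rpow_natCast, ← Real.rpow_mul ht]
  norm_num

lemma add_smul_eQ_zero (x y s : ℝ) :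
    ((![x, 0, 0, y], 0) : PS) + s • eQ 0 = (![x + s, 0, 0, y], 0) := by
  ext i <;> fin_cases i <;> simp [eQ, Matrix.vecHead, Matrix.vecTail]

lemma add_smul_eQ_three (x y s : ℝ) :
    ((![x, 0, 0, y], 0) : PS) + s • eQ 3 = (![x, 0, 0, y + s], 0) := by
  ext i <;> fin_cases i <;> simp [eQ, Matrix.vecHead, Matrix.vecTail]

lemma Hred_Vnewt_plane_eq_effPot {ν₁ ν₂ μ₁ μ₂ m m₁ x y : ℝ} (hm : m ≠ 0) (hμ : |μ₂| ≤ μ₁)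
    (hx : 0 < x) (hy : y ≠ 0) :
    Hred ν₁ ν₂ μ₁ μ₂ (Vnewt m₁ m m) (![x, 0, 0, y], 0) =
      effPot (μ₂ ^ 2 / (2 * ν₁)) (μ₁ ^ 2 / (2 * ν₂)) (m * m) (4 * m * m₁) x y := by
  obtain ⟨hμ₂, hμ₂'⟩ := abs_le.1 hμ
  have hhalf : m / (m + m) = 1 / 2 := by field_simp; ring
  have hdist : √((2 ^ 2)⁻¹ * x ^ 2 + y ^ 2) = √(x ^ 2 + 4 * y ^ 2) / 2 := by
    rw [show (2 ^ 2)⁻¹ * x ^ 2 + y ^ 2 = (x ^ 2 + 4 * y ^ 2) / 2 ^ 2 by ring,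
      Real.sqrt_div' _ (by positivity), Real.sqrt_sq (by norm_num)]
  simp only [Hred, fred, Vnewt, effPot, one_div, mul_inv_rev, Pi.zero_apply, ne_eq,
    OfNat.ofNat_ne_zero, not_false_eq_true, zero_pow, add_zero, Fin.isValue,
    Matrix.cons_val_zero, mul_zero, Matrix.cons_val_one, sub_self, Matrix.cons_val, sub_zero,
    Real.sqrt_sq_eq_abs, abs_of_nonneg (sub_nonneg.2 hμ₂'),
    abs_of_nonneg (by linarith : 0 ≤ μ₁ + μ₂), sub_add_add_cancel, zero_add, zero_mul,
    abs_of_pos hx, hhalf, inv_pow, mul_inv_cancel₀, hdist]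
  field_simp
  ring

lemma contDiffAt_Vnewt {m₁ m₂ m₃ : ℝ} {s : Fin 3 → ℝ} (h₀ : 0 < s 0)
    (h₁ : 0 < (m₂ / (m₂ + m₃)) ^ 2 * s 0 + s 1 + 2 * (m₂ / (m₂ + m₃)) * s 2)
    (h₂ : 0 < (m₃ / (m₂ + m₃)) ^ 2 * s 0 + s 1 - 2 * (m₃ / (m₂ + m₃)) * s 2) :
    ContDiffAt ℝ 2 (Vnewt m₁ m₂ m₃) s := by
  unfold Vnewt
  fun_prop (disch := first | exact ne_of_gt ‹_› | exact ne_of_gt (Real.sqrt_pos.2 ‹_›))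

lemma contDiffAt_Hred_plane {ν₁ ν₂ μ₁ μ₂ : ℝ} {V : (Fin 3 → ℝ) → ℝ} {x y : ℝ}
    (hV : ContDiffAt ℝ 2 V ![x ^ 2, y ^ 2, 0]) (hx : x ≠ 0) (hy : y ≠ 0)
    (hdiff : μ₁ ≠ μ₂) (hsum : μ₁ + μ₂ ≠ 0) :
    ContDiffAt ℝ 2 (Hred ν₁ ν₂ μ₁ μ₂ V) ((![x, 0, 0, y], 0) : PS) := by
  have hV' : ContDiffAt ℝ 2 (fun z : PS => V ![z.1 0 ^ 2 + z.1 1 ^ 2, z.1 2 ^ 2 + z.1 3 ^ 2,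
      z.1 0 * z.1 2 + z.1 1 * z.1 3]) (![x, 0, 0, y], 0) := by
    refine ContDiffAt.comp (g := V) _ ?_
      (contDiff_pi.2 fun i => by fin_cases i <;> simp <;> fun_prop).contDiffAt
    convert hV using 1
    ext i
    fin_cases i <;> simp
  unfold Hred fred
  dsimp only
  refine ContDiffAt.add ?_ hV'
  fun_prop (disch := simp [*, sub_eq_zero])

section PlaneHessian

variable {H : PS → ℝ} {a b c d x y : ℝ}

lemma hasDerivAt_add_smul_eQ_zero
    (hφ : ∀ x y, 0 < x → 0 < y → H (![x, 0, 0, y], 0) = effPot a b c d x y)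
    (hx : 0 < x) (hy : 0 < y) :
    HasDerivAt (fun t : ℝ => H ((![x, 0, 0, y], 0) + t • eQ 0)) (effPotDx a c d x y) 0 := by
  refine (hasDerivAt_effPot_x (b := b) hx.ne').comp_const_add_zero.congr_of_eventuallyEq ?_
  filter_upwards [Ioi_mem_nhds (neg_neg_of_pos hx)] with t ht
  rw [add_smul_eQ_zero, hφ _ _ (by linarith [ht.out]) hy]

lemma hasDerivAt_add_smul_eQ_three
    (hφ : ∀ x y, 0 < x → 0 < y → H (![x, 0, 0, y], 0) = effPot a b c d x y)
    (hx : 0 < x) (hy : 0 < y) :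
    HasDerivAt (fun t : ℝ => H ((![x, 0, 0, y], 0) + t • eQ 3)) (effPotDy b d x y) 0 := by
  refine (hasDerivAt_effPot_y (a := a) (c := c) hy.ne').comp_const_add_zero.congr_of_eventuallyEq ?_
  filter_upwards [Ioi_mem_nhds (neg_neg_of_pos hy)] with t ht
  rw [add_smul_eQ_three, hφ _ _ hx (by linarith [ht.out])]

lemma D2_eQ_zero_eQ_zero (hH : ContDiffAt ℝ 2 H (![x, 0, 0, y], 0))
    (hφ : ∀ x y, 0 < x → 0 < y → H (![x, 0, 0, y], 0) = effPot a b c d x y)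
    (hx : 0 < x) (hy : 0 < y) :
    D2 H (![x, 0, 0, y], 0) (eQ 0) (eQ 0) = effPotDxx a c d x y := by
  refine fderiv_fderiv_apply_eq_of_hasDerivAt hH ?_
    (hasDerivAt_effPotDx_x hx.ne').comp_const_add_zero
  filter_upwards [Ioi_mem_nhds (neg_neg_of_pos hx)] with s hs
  rw [add_smul_eQ_zero]
  exact hasDerivAt_add_smul_eQ_zero hφ (by linarith [hs.out]) hy

lemma D2_eQ_zero_eQ_three (hH : ContDiffAt ℝ 2 H (![x, 0, 0, y], 0))
    (hφ : ∀ x y, 0 < x → 0 < y → H (![x, 0, 0, y], 0) = effPot a b c d x y)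
    (hx : 0 < x) (hy : 0 < y) :
    D2 H (![x, 0, 0, y], 0) (eQ 0) (eQ 3) = effPotDxy d x y := by
  refine fderiv_fderiv_apply_eq_of_hasDerivAt hH ?_
    (hasDerivAt_effPotDy_x (b := b) hx.ne').comp_const_add_zero
  filter_upwards [Ioi_mem_nhds (neg_neg_of_pos hx)] with s hs
  rw [add_smul_eQ_zero]
  exact hasDerivAt_add_smul_eQ_three hφ (by linarith [hs.out]) hy

lemma D2_eQ_three_eQ_three (hH : ContDiffAt ℝ 2 H (![x, 0, 0, y], 0))
    (hφ : ∀ x y, 0 < x → 0 < y → H (![x, 0, 0, y], 0) = effPot a b c d x y)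
    (hx : 0 < x) (hy : 0 < y) :
    D2 H (![x, 0, 0, y], 0) (eQ 3) (eQ 3) = effPotDyy b d x y := by
  refine fderiv_fderiv_apply_eq_of_hasDerivAt hH ?_
    (hasDerivAt_effPotDy_y hy.ne').comp_const_add_zero
  filter_upwards [Ioi_mem_nhds (neg_neg_of_pos hy)] with s hs
  rw [add_smul_eQ_three]
  exact hasDerivAt_add_smul_eQ_three hφ hx (by linarith [hs.out])

end PlaneHessian

/-- At an isosceles relative equilibrium the `(q₁,q₄)` block of the Hessian of the
fully reduced Hamiltonian is positive definite (both eigenvalues positive). -/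
theorem isosceles_q1q4_block_posdef (m m₁ μ₁ μ₂ q₁ q₄ : ℝ) (hm : 0 < m)
    (hm₁ : 0 < m₁) (hμ : μ₁ > μ₂) (hμ₂ : 0 < μ₂) (hq₁ : 0 < q₁) (hq₄ : 0 < q₄)
    (heq1 : m ^ 2 / q₁ ^ 2 + 4 * m * m₁ * q₁ / (q₁ ^ 2 + 4 * q₄ ^ 2) ^ ((3 : ℝ) / 2) -
      μ₂ ^ 2 / ((m / 2) * q₁ ^ 3) = 0)
    (heq2 : 16 * m * m₁ * q₄ / (q₁ ^ 2 + 4 * q₄ ^ 2) ^ ((3 : ℝ) / 2) -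
      μ₁ ^ 2 / ((2 * m * m₁ / (2 * m + m₁)) * q₄ ^ 3) = 0) :
    (let H := Hred (m / 2) (2 * m * m₁ / (2 * m + m₁)) μ₁ μ₂ (Vnewt m₁ m m)
     let zs : PS := (![q₁, 0, 0, q₄], 0)
     (!![D2 H zs (eQ 0) (eQ 0), D2 H zs (eQ 0) (eQ 3);
         D2 H zs (eQ 3) (eQ 0), D2 H zs (eQ 3) (eQ 3)]).PosDef) := by
  intro H zs
  have hφ := fun x y (hx : 0 < x) (hy : 0 < y) =>
    Hred_Vnewt_plane_eq_effPot (ν₁ := m / 2) (ν₂ := 2 * m * m₁ / (2 * m + m₁)) (m₁ := m₁)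
      hm.ne' (abs_le.2 ⟨by linarith, hμ.le⟩) hx hy.ne'
  have hH : ContDiffAt ℝ 2 H zs :=
    contDiffAt_Hred_plane (contDiffAt_Vnewt (by simp; positivity) (by simp; positivity)
      (by simp; positivity)) hq₁.ne' hq₄.ne' hμ.ne' (by linarith : 0 < μ₁ + μ₂).ne'
  rw [show D2 H zs (eQ 3) (eQ 0) = D2 H zs (eQ 0) (eQ 3) from fderiv_fderiv_apply_comm hH _ _,
    D2_eQ_zero_eQ_zero hH hφ hq₁ hq₄, D2_eQ_zero_eQ_three hH hφ hq₁ hq₄,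
    D2_eQ_three_eQ_three hH hφ hq₁ hq₄]
  rw [rpow_three_halves_eq_sqrt_pow (by positivity)] at heq1 heq2
  refine posDef_effPot_hessian_of_critical (by positivity) (by positivity) hq₁ hq₄.ne' ?_ ?_
  · unfold effPotDx
    linear_combination heq1
  · unfold effPotDy
    linear_combination heq2

end
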